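/- Uniform a priori bounds for the second-order convex splitting scheme: let φ^0 be a periodic grid function, set φ^{−1} := φ^0 and ψ^0 := 0, and suppose that for each k = 0, 1, ..., ℓ−1 the pair (φ^{k+1}, ψ^{k+1}) is a periodic solution of the second-order convex splitting scheme with data (φ^{k−1}, φ^k, ψ^k). Suppose C₅, C₆, C₇ > 0 are constants such that every periodic grid function u satisfies F(u) ≥ C₅·‖u‖_{2,2}² − (L_x·L_y)/4, F(u) ≥ C₆·‖u‖_∞² − (L_x·L_y)/4, and F(u) ≥ C₇·‖∇_h u‖₄² − (L_x·L_y)/4. Set M₀ := F(φ^0) + (L_x·L_y)/4. Then: (i) s·Σ_{k=0}^{ℓ−1}‖ψ^{k+1/2}‖_{−1}² + (s⁴/2)·Σ_{k=0}^{ℓ−1}‖∇_h(D_s²φ^k)‖₂² ≤ M₀, where D_s²φ^k = (φ^{k+1} − 2φ^k + φ^{k−1})/s²; (ii) max_{0 ≤ k ≤ ℓ} ‖φ^k‖_{2,2} ≤ (M₀/C₅)^{1/2}; (iii) max_{0 ≤ k ≤ ℓ} ‖φ^k‖_∞ ≤ (M₀/C₆)^{1/2}; (iv) max_{0 ≤ k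 ≤ ℓ} ‖∇_hφ^k‖₄ ≤ (M₀/C₇)^{1/2}. -/

import Mathlib

open Finset

noncomputable section

/-- Periodic grid functions on an `m × n` grid (indices taken modulo `m` and `n`). -/
abbrev Grid (m n : ℕ) := ZMod m × ZMod n → ℝ

/-- Forward difference in the `x` direction. -/
def Dx {m n : ℕ} (h : ℝ) (φ : Grid m n) : Grid m n :=
  fun p => (φ (p.1 + 1, p.2) - φ p) / h

/-- Forward difference in the `y` direction. -/
def Dy {m n : ℕ} (h : ℝ) (φ : Grid m n) : Grid m n :=
  fun p => (φ (p.1, p.2 + 1) - φ p) / h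

/-- The five-point discrete Laplacian. -/
def lapH {m n : ℕ} (h : ℝ) (φ : Grid m n) : Grid m n :=
  fun p => (φ (p.1 + 1, p.2) + φ (p.1 - 1, p.2) + φ (p.1, p.2 + 1) + φ (p.1, p.2 - 1)
    - 4 * φ p) / h ^ 2

/-- The discrete chemical potential `μ` of the second-order convex splitting scheme,
built from `φ^{k−1} = φm`, `φ^k = φk` and the unknown `φ^{k+1} = φn`. -/
def chemPot {m n : ℕ} (α h : ℝ) (φm φk φn : Grid m n) : Grid m n :=
  fun p => (φn p ^ 2 + φk p ^ 2) / 2 * ((φn p + φk p) / 2)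
    + α * ((φn p + φk p) / 2)
    + lapH h (fun q => 3 * φk q - φm q) p
    + lapH h (lapH h (fun q => (φn q + φk q) / 2)) p

/-- The second-order convex splitting scheme for the MPFC equation:
`β(ψ^{k+1} − ψ^k) = s Δₕμ − s ψ^{k+1/2}` and `φ^{k+1} − φ^k = s ψ^{k+1/2}`. -/
def Scheme {m n : ℕ} (β α s h : ℝ) (φm φk ψk φn ψn : Grid m n) : Prop :=
  (∀ p, β * (ψn p - ψk p)
      = s * lapH h (chemPot α h φm φk φn) p - s * ((ψn p + ψk p) / 2)) ∧
  (∀ p, φn p - φk p = s * ((ψn p + ψk p) / 2))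

/-- Discrete `L²` norm. -/
def norm2 {m n : ℕ} [NeZero m] [NeZero n] (h : ℝ) (φ : Grid m n) : ℝ :=
  Real.sqrt (h ^ 2 * ∑ p : ZMod m × ZMod n, φ p ^ 2)

/-- Discrete `L²` norm of the gradient. -/
def gradNorm2 {m n : ℕ} [NeZero m] [NeZero n] (h : ℝ) (φ : Grid m n) : ℝ :=
  Real.sqrt (h ^ 2 * ∑ p : ZMod m × ZMod n, (Dx h φ p ^ 2 + Dy h φ p ^ 2))

/-- Discrete `L⁴` norm. -/
def norm4 {m n : ℕ} [NeZero m] [NeZero n] (h : ℝ) (φ : Grid m n) : ℝ :=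
  (h ^ 2 * ∑ p : ZMod m × ZMod n, φ p ^ 4) ^ ((1 : ℝ) / 4)

/-- The discrete MPFC energy
`F(φ) = ¼‖φ‖₄⁴ + (α/2)‖φ‖₂² − ‖∇ₕφ‖₂² + ½‖Δₕφ‖₂²`. -/
def energyF {m n : ℕ} [NeZero m] [NeZero n] (α h : ℝ) (φ : Grid m n) : ℝ :=
  1 / 4 * norm4 h φ ^ 4 + α / 2 * norm2 h φ ^ 2 - gradNorm2 h φ ^ 2
    + 1 / 2 * norm2 h (lapH h φ) ^ 2

/-- `u` is the mean-zero periodic solution of the discrete Poisson problem `−Δₕu = ψ`;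
the "−1" norm of `ψ` is then `‖∇ₕu‖₂`. -/
def IsNegLapSol {m n : ℕ} [NeZero m] [NeZero n] (h : ℝ) (ψ u : Grid m n) : Prop :=
  (∑ p : ZMod m × ZMod n, u p = 0) ∧ ∀ p, -(lapH h u p) = ψ p

/-- The modified discrete pseudo-energy
`F̃(φ, φ̃, ψ) = F(φ) + (β/2)‖ψ‖_{−1}² + ½‖∇ₕ(φ − φ̃)‖₂²`, expressed through the
mean-zero solution `u` of `−Δₕu = ψ`, so that `‖ψ‖_{−1} = ‖∇ₕu‖₂`. -/
def Ftilde {m n : ℕ} [NeZero m] [NeZero n] (β α h : ℝ) (φ φt u : Grid m n) : ℝ :=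
  energyF α h φ + β / 2 * gradNorm2 h u ^ 2
    + 1 / 2 * gradNorm2 h (fun p => φ p - φt p) ^ 2

/-- Discrete `L⁴` norm of the gradient. -/
def gradNorm4 {m n : ℕ} [NeZero m] [NeZero n] (h : ℝ) (φ : Grid m n) : ℝ :=
  (h ^ 2 * ∑ p : ZMod m × ZMod n, (Dx h φ p ^ 4 + Dy h φ p ^ 4)) ^ ((1 : ℝ) / 4)

/-- Discrete `L^∞` norm. -/
def normInf {m n : ℕ} [NeZero m] [NeZero n] (φ : Grid m n) : ℝ :=
  ⨆ p : ZMod m × ZMod n, |φ p|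

/-- Discrete `H²` norm. -/
def norm22 {m n : ℕ} [NeZero m] [NeZero n] (h : ℝ) (φ : Grid m n) : ℝ :=
  Real.sqrt (norm2 h φ ^ 2 + gradNorm2 h φ ^ 2 + norm2 h (lapH h φ) ^ 2)


/-!
Testing the `ψ`-equation against a discrete potential of `ψ^{k+1/2}` and using
`φ^{k+1} − φ^k = s ψ^{k+1/2}` turns one step of the scheme into an exact identity: the
pseudo-energy `F̃(φ^{k+1}, φ^k, ψ^{k+1}) = F(φ^{k+1}) + (β/2)‖ψ^{k+1}‖₋₁² + ½‖∇ₕ(φ^{k+1} − φ^k)‖₂²`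
drops by `s‖ψ^{k+1/2}‖₋₁² + ½‖∇ₕ(φ^{k+1} − 2φ^k + φ^{k−1})‖₂²`. Besides summation by parts,
the only ingredient is a polarization identity for the explicit extrapolation `3φ^k − φ^{k−1}`
of the concave part. Telescoping from `F̃ = F(φ^0)` gives (i) and `F(φ^k) ≤ F(φ^0)`, which the
coercivity hypotheses turn into (ii)–(iv). The potentials exist because the scheme conserves
the mean of `ψ` and `−Δₕ` is invertible on mean-zero grid functions.
-/

theorem sum_sub_shift_mul {G : Type*} [AddCommGroup G] [Fintype G] (g b : G → ℝ) (c : G) :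
    ∑ p, (g (p - c) - g p) * b p = ∑ p, g p * (b (p + c) - b p) := by
  have hshift : ∑ p, g (p - c) * b p = ∑ p, g p * b (p + c) :=
    (Fintype.sum_equiv (Equiv.addRight c) _ _ fun p => by simp).symm
  simp only [sub_mul, mul_sub, Finset.sum_sub_distrib, hshift]

section GridCalculus

variable {m n : ℕ} (h : ℝ)

theorem neg_lapH_eq (a : Grid m n) (p : ZMod m × ZMod n) :
    -lapH h a p = ((Dx h a (p - (1, 0)) - Dx h a p) + (Dy h a (p - (0, 1)) - Dy h a p)) / h := by
  obtain ⟨i, j⟩ := p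
  simp only [lapH, Dx, Dy, Prod.mk_sub_mk, sub_zero, sub_add_cancel]
  ring

variable [NeZero m] [NeZero n]

theorem sum_neg_lapH_mul (a b : Grid m n) :
    ∑ p, -lapH h a p * b p = ∑ p, (Dx h a p * Dx h b p + Dy h a p * Dy h b p) := by
  have hx := sum_sub_shift_mul (Dx h a) b (1, 0)
  have hy := sum_sub_shift_mul (Dy h a) b (0, 1)
  calc ∑ p, -lapH h a p * b p
      = (∑ p, (Dx h a (p - (1, 0)) - Dx h a p) * b p
          + ∑ p, (Dy h a (p - (0, 1)) - Dy h a p) * b p) / h := by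
        rw [← Finset.sum_add_distrib, Finset.sum_div]
        exact Finset.sum_congr rfl fun p _ => by rw [neg_lapH_eq]; ring
    _ = _ := by
        rw [hx, hy, ← Finset.sum_add_distrib, Finset.sum_div]
        refine Finset.sum_congr rfl fun ⟨i, j⟩ _ => ?_
        simp only [Dx, Dy, Prod.mk_add_mk, add_zero]
        ring

theorem sum_lapH_mul_comm (a b : Grid m n) : ∑ p, lapH h a p * b p = ∑ p, a p * lapH h b p := by
  have hab := sum_neg_lapH_mul h a b
  have hba := sum_neg_lapH_mul h b a
  simp only [neg_mul, Finset.sum_neg_distrib] at hab hba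
  rw [Finset.sum_congr rfl fun p _ => mul_comm (a p) (lapH h b p), ← neg_inj, hab, hba]
  exact Finset.sum_congr rfl fun p _ => by ring

theorem sum_lapH_eq_zero (a : Grid m n) : ∑ p, lapH h a p = 0 := by
  have h1 := sum_neg_lapH_mul h a fun _ => 1
  simp only [Dx, Dy, sub_self, zero_div, mul_zero, add_zero, Finset.sum_const_zero, mul_one,
    Finset.sum_neg_distrib, neg_eq_zero] at h1
  exact h1

theorem gradNorm2_sq (a : Grid m n) :
    gradNorm2 h a ^ 2 = h ^ 2 * ∑ p, (Dx h a p ^ 2 + Dy h a p ^ 2) :=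
  Real.sq_sqrt (by positivity)

theorem norm2_sq (a : Grid m n) : norm2 h a ^ 2 = h ^ 2 * ∑ p, a p ^ 2 :=
  Real.sq_sqrt (by positivity)

theorem norm4_pow_four (a : Grid m n) : norm4 h a ^ 4 = h ^ 2 * ∑ p, a p ^ 4 := by
  rw [norm4, ← Real.rpow_natCast, ← Real.rpow_mul (by positivity)]
  norm_num

theorem sq_mul_sum_neg_lapH_mul_self (a : Grid m n) :
    h ^ 2 * ∑ p, -lapH h a p * a p = gradNorm2 h a ^ 2 := by
  rw [sum_neg_lapH_mul, gradNorm2_sq]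
  simp only [sq]

theorem sq_mul_sum_neg_lapH_sub_mul_add (a b : Grid m n) :
    h ^ 2 * ∑ p, -lapH h (fun q => a q - b q) p * (a p + b p)
      = gradNorm2 h a ^ 2 - gradNorm2 h b ^ 2 := by
  rw [sum_neg_lapH_mul, gradNorm2_sq, gradNorm2_sq, ← mul_sub, ← Finset.sum_sub_distrib]
  congr 1
  refine Finset.sum_congr rfl fun p _ => ?_
  simp only [Dx, Dy]
  ring

theorem gradNorm2_div_sq (a : Grid m n) (c : ℝ) :
    gradNorm2 h (fun p => a p / c) ^ 2 = gradNorm2 h a ^ 2 / c ^ 2 := by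
  rw [gradNorm2_sq, gradNorm2_sq, mul_div_assoc, Finset.sum_div]
  congr 1
  refine Finset.sum_congr rfl fun p _ => ?_
  simp only [Dx, Dy]
  ring

end GridCalculus

theorem ZMod.apply_eq_apply_zero_of_add_one {m : ℕ} [NeZero m] {α : Type*} (f : ZMod m → α)
    (hf : ∀ i, f (i + 1) = f i) (i : ZMod m) : f i = f 0 := by
  obtain ⟨k, rfl⟩ := ZMod.natCast_zmod_surjective i
  induction k with
  | zero => simp
  | succ k ih => rw [Nat.cast_succ, hf, ih]

section Poisson

variable {m n : ℕ} [NeZero m] [NeZero n] {h : ℝ}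

theorem eq_apply_zero_of_lapH_eq_zero (hh : h ≠ 0) {z : Grid m n} (hz : ∀ p, lapH h z p = 0)
    (p : ZMod m × ZMod n) : z p = z 0 := by
  have hgrad : ∑ p, (Dx h z p ^ 2 + Dy h z p ^ 2) = 0 := by
    simpa [hz, sq] using (sum_neg_lapH_mul h z z).symm
  have hflat : ∀ p, Dx h z p = 0 ∧ Dy h z p = 0 := fun p => by
    have := (Finset.sum_eq_zero_iff_of_nonneg fun p _ => by positivity).1 hgrad p
      (Finset.mem_univ p)
    constructor <;> nlinarith [sq_nonneg (Dx h z p), sq_nonneg (Dy h z p)]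
  have hx : ∀ i j, z (i + 1, j) = z (i, j) := fun i j => by
    simpa [Dx, hh, sub_eq_zero] using (hflat (i, j)).1
  have hy : ∀ i j, z (i, j + 1) = z (i, j) := fun i j => by
    simpa [Dy, hh, sub_eq_zero] using (hflat (i, j)).2
  obtain ⟨i, j⟩ := p
  rw [ZMod.apply_eq_apply_zero_of_add_one (fun j => z (i, j)) (hy i) j,
    ZMod.apply_eq_apply_zero_of_add_one (fun i => z (i, 0)) (fun i => hx i 0) i]
  rfl

/-- `−Δₕ` maps the mean-zero grid functions injectively, hence onto, themselves. -/
theorem exists_isNegLapSol (hh : h ≠ 0) {ψ : Grid m n} (hψ : ∑ p, ψ p = 0) :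
    ∃ u, IsNegLapSol h ψ u := by
  let meanZero : Submodule ℝ (Grid m n) := LinearMap.ker
    ({ toFun := fun f => ∑ p, f p
       map_add' := fun f g => Finset.sum_add_distrib
       map_smul' := fun c f => by simp [Finset.mul_sum] } : Grid m n →ₗ[ℝ] ℝ)
  let negLap : Grid m n →ₗ[ℝ] Grid m n :=
    { toFun := fun f p => -lapH h f p
      map_add' := fun f g => by funext p; simp only [lapH, Pi.add_apply]; ring
      map_smul' := fun c f => by
        funext p
        simp only [lapH, Pi.smul_apply, smul_eq_mul, RingHom.id_apply]
        ring }
  let L : meanZero →ₗ[ℝ] meanZero := negLap.restrict fun f _ => by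
    simp [meanZero, negLap, sum_lapH_eq_zero]
  have hinj : Function.Injective L := by
    refine (injective_iff_map_eq_zero L).2 fun z hz => ?_
    have hlap : ∀ p, lapH h (z : Grid m n) p = 0 := fun p => by
      simpa [L, negLap] using congrFun (congrArg Subtype.val hz) p
    have hconst := eq_apply_zero_of_lapH_eq_zero hh hlap
    have hsum : ∑ p, (z : Grid m n) p = 0 := z.2
    simp only [hconst, Finset.sum_const, Finset.card_univ, nsmul_eq_mul, mul_eq_zero,
      Nat.cast_eq_zero, Fintype.card_ne_zero, false_or] at hsum
    ext p
    simpa [hconst p] using hsum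
  obtain ⟨u, hu⟩ := LinearMap.injective_iff_surjective.1 hinj ⟨ψ, hψ⟩
  exact ⟨u, u.2, fun p => congrFun (congrArg Subtype.val hu) p⟩

end Poisson

section EnergyIdentity

variable {m n : ℕ} [NeZero m] [NeZero n] (α h : ℝ)

theorem sq_mul_sum_cubic_mul_sub (a b : Grid m n) :
    h ^ 2 * ∑ p, (a p ^ 2 + b p ^ 2) / 2 * ((a p + b p) / 2) * (a p - b p)
      = 1 / 4 * norm4 h a ^ 4 - 1 / 4 * norm4 h b ^ 4 := by
  rw [norm4_pow_four, norm4_pow_four]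
  simp only [Finset.mul_sum, ← Finset.sum_sub_distrib]
  exact Finset.sum_congr rfl fun p _ => by ring

theorem sq_mul_sum_linear_mul_sub (a b : Grid m n) :
    h ^ 2 * ∑ p, α * ((a p + b p) / 2) * (a p - b p)
      = α / 2 * norm2 h a ^ 2 - α / 2 * norm2 h b ^ 2 := by
  rw [norm2_sq, norm2_sq]
  simp only [Finset.mul_sum, ← Finset.sum_sub_distrib]
  exact Finset.sum_congr rfl fun p _ => by ring

theorem sq_mul_sum_biLap_mul_sub (a b : Grid m n) :
    h ^ 2 * ∑ p, lapH h (lapH h fun q => (a q + b q) / 2) p * (a p - b p)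
      = 1 / 2 * norm2 h (lapH h a) ^ 2 - 1 / 2 * norm2 h (lapH h b) ^ 2 := by
  rw [sum_lapH_mul_comm, norm2_sq, norm2_sq]
  simp only [Finset.mul_sum, ← Finset.sum_sub_distrib]
  refine Finset.sum_congr rfl fun p _ => ?_
  simp only [lapH]
  ring

theorem sq_mul_sum_lapH_extrapolation_mul_sub (c b a : Grid m n) :
    h ^ 2 * ∑ p, lapH h (fun q => 3 * b q - c q) p * (a p - b p)
      = -(gradNorm2 h a ^ 2 - gradNorm2 h b ^ 2)
        + 1 / 2 * gradNorm2 h (fun p => a p - b p) ^ 2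
        - 1 / 2 * gradNorm2 h (fun p => b p - c p) ^ 2
        + 1 / 2 * gradNorm2 h (fun p => a p - 2 * b p + c p) ^ 2 := by
  have hsbp := sum_neg_lapH_mul h (fun q => 3 * b q - c q) fun p => a p - b p
  simp only [neg_mul, Finset.sum_neg_distrib] at hsbp
  rw [← neg_neg (∑ p, _), hsbp]
  simp only [gradNorm2_sq, Finset.mul_sum, ← Finset.sum_sub_distrib, ← Finset.sum_add_distrib,
    ← Finset.sum_neg_distrib]
  refine Finset.sum_congr rfl fun p _ => ?_
  simp only [Dx, Dy]
  ring

theorem sq_mul_sum_chemPot_mul_sub (c b a : Grid m n) :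
    h ^ 2 * ∑ p, chemPot α h c b a p * (a p - b p)
      = energyF α h a - energyF α h b
        + 1 / 2 * gradNorm2 h (fun p => a p - b p) ^ 2
        - 1 / 2 * gradNorm2 h (fun p => b p - c p) ^ 2
        + 1 / 2 * gradNorm2 h (fun p => a p - 2 * b p + c p) ^ 2 := by
  simp only [chemPot, add_mul, Finset.sum_add_distrib, mul_add]
  rw [sq_mul_sum_cubic_mul_sub, sq_mul_sum_linear_mul_sub,
    sq_mul_sum_lapH_extrapolation_mul_sub, sq_mul_sum_biLap_mul_sub, energyF, energyF]
  ring

end EnergyIdentity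

section Scheme

variable {m n : ℕ} [NeZero m] [NeZero n] {β α s h : ℝ}

theorem sum_eq_zero_of_scheme (hβs : β + s / 2 ≠ 0) {φm φk ψk φn ψn : Grid m n}
    (hS : Scheme β α s h φm φk ψk φn ψn) (hψk : ∑ p, ψk p = 0) : ∑ p, ψn p = 0 := by
  have hsum := Finset.sum_congr rfl fun p (_ : p ∈ Finset.univ) => hS.1 p
  simp only [← Finset.mul_sum, Finset.sum_sub_distrib, sum_lapH_eq_zero, ← Finset.sum_div,
    Finset.sum_add_distrib, hψk] at hsum
  exact (mul_eq_zero.1 (by linarith : (β + s / 2) * ∑ p, ψn p = 0)).resolve_left hβs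

/-- `2u − v` is a potential of `ψ^{k+1}`, so this is the decrease of `F̃` over one step. -/
theorem Ftilde_step {φm φk ψk φn ψn v u : Grid m n}
    (hS : Scheme β α s h φm φk ψk φn ψn) (hv : ∀ p, -lapH h v p = ψk p)
    (hu : ∀ p, -lapH h u p = (ψn p + ψk p) / 2) :
    Ftilde β α h φn φk (fun p => 2 * u p - v p) + s * gradNorm2 h u ^ 2
        + 1 / 2 * gradNorm2 h (fun p => φn p - 2 * φk p + φm p) ^ 2
      = Ftilde β α h φk φm v := by
  obtain ⟨hψ, hφ⟩ := hS
  have hincr : h ^ 2 * ∑ p, (ψn p - ψk p) * u p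
      = (gradNorm2 h (fun p => 2 * u p - v p) ^ 2 - gradNorm2 h v ^ 2) / 2 := by
    rw [← sq_mul_sum_neg_lapH_sub_mul_add, Finset.mul_sum, Finset.mul_sum, Finset.sum_div]
    refine Finset.sum_congr rfl fun p _ => ?_
    have hlap : lapH h (fun q => 2 * u q - v q - v q) p = 2 * lapH h u p - 2 * lapH h v p := by
      simp only [lapH]
      ring
    rw [hlap]
    linear_combination (h ^ 2 * u p) * (2 * hv p - 2 * hu p)
  have havg : h ^ 2 * ∑ p, (ψn p + ψk p) / 2 * u p = gradNorm2 h u ^ 2 := by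
    rw [← sq_mul_sum_neg_lapH_mul_self]
    simp only [hu]
  have hchem : s * (h ^ 2 * ∑ p, lapH h (chemPot α h φm φk φn) p * u p)
      = -(h ^ 2 * ∑ p, chemPot α h φm φk φn p * (φn p - φk p)) := by
    rw [sum_lapH_mul_comm, Finset.mul_sum, Finset.mul_sum, Finset.mul_sum,
      ← Finset.sum_neg_distrib]
    refine Finset.sum_congr rfl fun p _ => ?_
    rw [hφ p, ← hu p]
    ring
  have hsum : β * (h ^ 2 * ∑ p, (ψn p - ψk p) * u p)
      = s * (h ^ 2 * ∑ p, lapH h (chemPot α h φm φk φn) p * u p)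
        - s * (h ^ 2 * ∑ p, (ψn p + ψk p) / 2 * u p) := by
    simp only [Finset.mul_sum, ← Finset.sum_sub_distrib]
    exact Finset.sum_congr rfl fun p _ => by linear_combination (h ^ 2 * u p) * hψ p
  rw [hincr, hchem, havg, sq_mul_sum_chemPot_mul_sub] at hsum
  rw [Ftilde, Ftilde]
  linarith

/-- Since `ψ^{k+1} = 2ψ^{k+1/2} − ψ^k`, potentials `u k` of the half-step averages
`ψ^{k+1/2}` yield potentials of the `ψ^k` themselves, without appeal to uniqueness. -/
def stepPotential (u : ℕ → Grid m n) : ℕ → Grid m n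
  | 0 => 0
  | k + 1 => fun p => 2 * u k p - stepPotential u k p

variable {ℓ : ℕ} {φ ψ u : ℕ → Grid m n}

theorem neg_lapH_stepPotential (hψ0 : ψ 0 = fun _ => 0)
    (hu : ∀ k < ℓ, IsNegLapSol h (fun p => (ψ (k + 1) p + ψ k p) / 2) (u k)) :
    ∀ k ≤ ℓ, ∀ p, -lapH h (stepPotential u k) p = ψ k p
  | 0, _, p => by simp [stepPotential, lapH, hψ0]
  | k + 1, hk, p => by
    have hprev := neg_lapH_stepPotential hψ0 hu k (by omega) p
    have hhalf := (hu k (by omega)).2 p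
    have hlap : lapH h (stepPotential u (k + 1)) p
        = 2 * lapH h (u k) p - lapH h (stepPotential u k) p := by
      simp only [stepPotential, lapH]
      ring
    linarith

theorem Ftilde_add_dissipation_eq (hψ0 : ψ 0 = fun _ => 0)
    (hS : ∀ k < ℓ, Scheme β α s h (φ (k - 1)) (φ k) (ψ k) (φ (k + 1)) (ψ (k + 1)))
    (hu : ∀ k < ℓ, IsNegLapSol h (fun p => (ψ (k + 1) p + ψ k p) / 2) (u k)) :
    ∀ j ≤ ℓ, Ftilde β α h (φ j) (φ (j - 1)) (stepPotential u j)
        + (s * ∑ k ∈ Finset.range j, gradNorm2 h (u k) ^ 2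
          + 1 / 2 * ∑ k ∈ Finset.range j,
              gradNorm2 h (fun p => φ (k + 1) p - 2 * φ k p + φ (k - 1) p) ^ 2)
      = energyF α h (φ 0)
  | 0, _ => by simp [Ftilde, stepPotential, gradNorm2, Dx, Dy]
  | j + 1, hj => by
    have hstep := Ftilde_step (hS j (by omega))
      (neg_lapH_stepPotential hψ0 hu j (by omega)) (hu j (by omega)).2
    have hprev := Ftilde_add_dissipation_eq hψ0 hS hu j (by omega)
    rw [Finset.sum_range_succ, Finset.sum_range_succ]
    simp only [Nat.add_sub_cancel, stepPotential] at hstep ⊢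
    linarith

theorem energyF_add_dissipation_le (hβ : 0 ≤ β) (hψ0 : ψ 0 = fun _ => 0)
    (hS : ∀ k < ℓ, Scheme β α s h (φ (k - 1)) (φ k) (ψ k) (φ (k + 1)) (ψ (k + 1)))
    (hu : ∀ k < ℓ, IsNegLapSol h (fun p => (ψ (k + 1) p + ψ k p) / 2) (u k)) {j : ℕ}
    (hj : j ≤ ℓ) :
    energyF α h (φ j)
        + (s * ∑ k ∈ Finset.range j, gradNorm2 h (u k) ^ 2
          + 1 / 2 * ∑ k ∈ Finset.range j,
              gradNorm2 h (fun p => φ (k + 1) p - 2 * φ k p + φ (k - 1) p) ^ 2)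
      ≤ energyF α h (φ 0) := by
  rw [← Ftilde_add_dissipation_eq hψ0 hS hu j hj, Ftilde]
  have := mul_nonneg hβ (sq_nonneg (gradNorm2 h (stepPotential u j)))
  nlinarith [sq_nonneg (gradNorm2 h fun p => φ j p - φ (j - 1) p)]

end Scheme

section Bounds

variable {m n : ℕ} [NeZero m] [NeZero n] {β α s h : ℝ} {ℓ : ℕ} {φ ψ : ℕ → Grid m n}

theorem sum_eq_zero_of_scheme_iterates (hβs : β + s / 2 ≠ 0) (hψ0 : ψ 0 = fun _ => 0)
    (hS : ∀ k < ℓ, Scheme β α s h (φ (k - 1)) (φ k) (ψ k) (φ (k + 1)) (ψ (k + 1))) :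
    ∀ k ≤ ℓ, ∑ p, ψ k p = 0
  | 0, _ => by simp [hψ0]
  | k + 1, hk => sum_eq_zero_of_scheme hβs (hS k (by omega))
      (sum_eq_zero_of_scheme_iterates hβs hψ0 hS k (by omega))

theorem exists_halfStep_potentials (hh : h ≠ 0) (hβs : β + s / 2 ≠ 0) (hψ0 : ψ 0 = fun _ => 0)
    (hS : ∀ k < ℓ, Scheme β α s h (φ (k - 1)) (φ k) (ψ k) (φ (k + 1)) (ψ (k + 1))) :
    ∃ u : ℕ → Grid m n, ∀ k < ℓ, IsNegLapSol h (fun p => (ψ (k + 1) p + ψ k p) / 2) (u k) := by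
  have hmean := sum_eq_zero_of_scheme_iterates hβs hψ0 hS
  have : ∀ k, ∃ u, k < ℓ → IsNegLapSol h (fun p => (ψ (k + 1) p + ψ k p) / 2) u := fun k => by
    by_cases hk : k < ℓ
    · obtain ⟨u, hu⟩ := exists_isNegLapSol hh (ψ := fun p => (ψ (k + 1) p + ψ k p) / 2) (by
        rw [← Finset.sum_div, Finset.sum_add_distrib, hmean (k + 1) hk, hmean k hk.le]
        norm_num)
      exact ⟨u, fun _ => hu⟩
    · exact ⟨0, fun hk' => absurd hk' hk⟩
  choose u hu using this
  exact ⟨u, hu⟩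

theorem energyF_le_energyF_zero (hh : h ≠ 0) (hβ : 0 < β) (hs : 0 < s)
    (hψ0 : ψ 0 = fun _ => 0)
    (hS : ∀ k < ℓ, Scheme β α s h (φ (k - 1)) (φ k) (ψ k) (φ (k + 1)) (ψ (k + 1))) {k : ℕ}
    (hk : k ≤ ℓ) : energyF α h (φ k) ≤ energyF α h (φ 0) := by
  obtain ⟨u, hu⟩ := exists_halfStep_potentials hh (by positivity) hψ0 hS
  have hdiss := energyF_add_dissipation_le hβ.le hψ0 hS hu hk
  have h₁ := Finset.sum_nonneg fun j (_ : j ∈ Finset.range k) => sq_nonneg (gradNorm2 h (u j))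
  have h₂ := Finset.sum_nonneg fun j (_ : j ∈ Finset.range k) =>
    sq_nonneg (gradNorm2 h fun p => φ (j + 1) p - 2 * φ j p + φ (j - 1) p)
  nlinarith

end Bounds

theorem le_sqrt_div_of_energy_le {C x c E E₀ : ℝ} (hC : 0 < C) (hcoer : E ≥ C * x ^ 2 - c)
    (hE : E ≤ E₀) : x ≤ Real.sqrt ((E₀ + c) / C) :=
  (le_abs_self x).trans (Real.abs_le_sqrt ((le_div_iff₀ hC).2 (by linarith)))

/-- The initialization `φ^{−1} := φ^0` is encoded by the truncated subtraction in
`φ (k - 1)`. -/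
theorem scheme_uniform_bounds_general (m n : ℕ) [NeZero m] [NeZero n]
    (β α s h : ℝ) (hβ : 0 < β) (hs : 0 < s) (hh : 0 < h)
    (ℓ : ℕ) (φ ψ : ℕ → Grid m n)
    (hψ0 : ψ 0 = fun _ => 0)
    (hScheme : ∀ k < ℓ, Scheme β α s h (φ (k - 1)) (φ k) (ψ k) (φ (k + 1)) (ψ (k + 1)))
    (C₅ C₆ C₇ : ℝ) (hC₅ : 0 < C₅) (hC₆ : 0 < C₆) (hC₇ : 0 < C₇)
    (hcoer₅ : ∀ u : Grid m n,
      energyF α h u ≥ C₅ * norm22 h u ^ 2 - ((m : ℝ) * h) * ((n : ℝ) * h) / 4)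
    (hcoer₆ : ∀ u : Grid m n,
      energyF α h u ≥ C₆ * normInf u ^ 2 - ((m : ℝ) * h) * ((n : ℝ) * h) / 4)
    (hcoer₇ : ∀ u : Grid m n,
      energyF α h u ≥ C₇ * gradNorm4 h u ^ 2 - ((m : ℝ) * h) * ((n : ℝ) * h) / 4) :
    (∀ uhalf : ℕ → Grid m n,
      (∀ k < ℓ, IsNegLapSol h (fun p => (ψ (k + 1) p + ψ k p) / 2) (uhalf k)) →
      s * ∑ k ∈ Finset.range ℓ, gradNorm2 h (uhalf k) ^ 2
          + s ^ 4 / 2 * ∑ k ∈ Finset.range ℓ,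
              gradNorm2 h (fun p => (φ (k + 1) p - 2 * φ k p + φ (k - 1) p) / s ^ 2) ^ 2
        ≤ energyF α h (φ 0) + ((m : ℝ) * h) * ((n : ℝ) * h) / 4) ∧
    (∀ k ≤ ℓ, norm22 h (φ k)
      ≤ Real.sqrt ((energyF α h (φ 0) + ((m : ℝ) * h) * ((n : ℝ) * h) / 4) / C₅)) ∧
    (∀ k ≤ ℓ, normInf (φ k)
      ≤ Real.sqrt ((energyF α h (φ 0) + ((m : ℝ) * h) * ((n : ℝ) * h) / 4) / C₆)) ∧
    (∀ k ≤ ℓ, gradNorm4 h (φ k)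
      ≤ Real.sqrt ((energyF α h (φ 0) + ((m : ℝ) * h) * ((n : ℝ) * h) / 4) / C₇)) := by
  have hdecay k (hk : k ≤ ℓ) := energyF_le_energyF_zero hh.ne' hβ hs hψ0 hScheme hk
  refine ⟨fun u hu => ?_, fun k hk => le_sqrt_div_of_energy_le hC₅ (hcoer₅ _) (hdecay k hk),
    fun k hk => le_sqrt_div_of_energy_le hC₆ (hcoer₆ _) (hdecay k hk),
    fun k hk => le_sqrt_div_of_energy_le hC₇ (hcoer₇ _) (hdecay k hk)⟩
  have hdiss := energyF_add_dissipation_le hβ.le hψ0 hScheme hu le_rfl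
  have hrescale : s ^ 4 / 2 * ∑ k ∈ Finset.range ℓ,
        gradNorm2 h (fun p => (φ (k + 1) p - 2 * φ k p + φ (k - 1) p) / s ^ 2) ^ 2
      = 1 / 2 * ∑ k ∈ Finset.range ℓ,
        gradNorm2 h (fun p => φ (k + 1) p - 2 * φ k p + φ (k - 1) p) ^ 2 := by
    simp only [Finset.mul_sum]
    refine Finset.sum_congr rfl fun k _ => ?_
    rw [gradNorm2_div_sq h (fun p => φ (k + 1) p - 2 * φ k p + φ (k - 1) p)]
    field_simp
  nlinarith [hcoer₅ (φ ℓ), mul_nonneg hC₅.le (sq_nonneg (norm22 h (φ ℓ)))]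

/-- Uniform a priori bounds for the second-order convex splitting scheme, with
initializations `φ^{−1} := φ^0` (encoded by truncated subtraction `φ (k-1)`) and
`ψ^0 := 0`, and `M₀ := F(φ^0) + Lx·Ly/4` where `Lx = m·h`, `Ly = n·h`. -/
theorem scheme_uniform_bounds (m n : ℕ) [NeZero m] [NeZero n]
    (β α s h : ℝ) (hβ : 0 < β) (hα : 0 < α) (hs : 0 < s) (hh : 0 < h)
    (ℓ : ℕ) (φ ψ : ℕ → Grid m n)
    (hψ0 : ψ 0 = fun _ => 0)
    (hScheme : ∀ k < ℓ, Scheme β α s h (φ (k - 1)) (φ k) (ψ k) (φ (k + 1)) (ψ (k + 1)))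
    (C₅ C₆ C₇ : ℝ) (hC₅ : 0 < C₅) (hC₆ : 0 < C₆) (hC₇ : 0 < C₇)
    (hcoer₅ : ∀ u : Grid m n,
      energyF α h u ≥ C₅ * norm22 h u ^ 2 - ((m : ℝ) * h) * ((n : ℝ) * h) / 4)
    (hcoer₆ : ∀ u : Grid m n,
      energyF α h u ≥ C₆ * normInf u ^ 2 - ((m : ℝ) * h) * ((n : ℝ) * h) / 4)
    (hcoer₇ : ∀ u : Grid m n,
      energyF α h u ≥ C₇ * gradNorm4 h u ^ 2 - ((m : ℝ) * h) * ((n : ℝ) * h) / 4) :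
    (∀ uhalf : ℕ → Grid m n,
      (∀ k < ℓ, IsNegLapSol h (fun p => (ψ (k + 1) p + ψ k p) / 2) (uhalf k)) →
      s * ∑ k ∈ Finset.range ℓ, gradNorm2 h (uhalf k) ^ 2
          + s ^ 4 / 2 * ∑ k ∈ Finset.range ℓ,
              gradNorm2 h (fun p => (φ (k + 1) p - 2 * φ k p + φ (k - 1) p) / s ^ 2) ^ 2
        ≤ energyF α h (φ 0) + ((m : ℝ) * h) * ((n : ℝ) * h) / 4) ∧
    (∀ k ≤ ℓ, norm22 h (φ k)
      ≤ Real.sqrt ((energyF α h (φ 0) + ((m : ℝ) * h) * ((n : ℝ) * h) / 4) / C₅)) ∧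
    (∀ k ≤ ℓ, normInf (φ k)
      ≤ Real.sqrt ((energyF α h (φ 0) + ((m : ℝ) * h) * ((n : ℝ) * h) / 4) / C₆)) ∧
    (∀ k ≤ ℓ, gradNorm4 h (φ k)
      ≤ Real.sqrt ((energyF α h (φ 0) + ((m : ℝ) * h) * ((n : ℝ) * h) / 4) / C₇)) :=
  scheme_uniform_bounds_general m n β α s h hβ hs hh ℓ φ ψ hψ0 hScheme C₅ C₆ C₇ hC₅ hC₆ hC₇ hcoer₅
    hcoer₆ hcoer₇
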